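/- arXiv:math-ph/0305053 — 6 statements merged into one kernel-verified Lean document; each statement's English description precedes it below -/
import Mathlib

section
/- Let X : ℝ → Matrix (Fin n) (Fin k) ℝ and Y : ℝ → Matrix (Fin k) (Fin k) ℝ satisfy the linear system U_{q,h}X = B X + A Y and U_{q,h}Y = -D X - C Y, with Y(t) and Y(qt+h) invertible. Then W = X Y⁻¹ satisfies the discrete matrix Riccati equation U_{q,h}W(t) = A(t) + B(t)W(t) + W(qt+h)C(t) + W(qt+h)D(t)W(t). -/
theorem discrete_matrix_riccati_from_linear_system
    (q h : ℝ) (hqh : ¬(q = 1 ∧ h = 0)) (n k : ℕ)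
    (A : ℝ → Matrix (Fin n) (Fin k) ℝ) (B : ℝ → Matrix (Fin n) (Fin n) ℝ)
    (C : ℝ → Matrix (Fin k) (Fin k) ℝ) (D : ℝ → Matrix (Fin k) (Fin n) ℝ)
    (X : ℝ → Matrix (Fin n) (Fin k) ℝ) (Y : ℝ → Matrix (Fin k) (Fin k) ℝ)
    (t : ℝ) (ht : (q - 1) * t + h ≠ 0)
    (hY : IsUnit (Y t).det) (hY' : IsUnit (Y (q * t + h)).det)
    (hX : ((q - 1) * t + h)⁻¹ • (X (q * t + h) - X t) = B t * X t + A t * Y t)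
    (hYeq : ((q - 1) * t + h)⁻¹ • (Y (q * t + h) - Y t) = -(D t * X t) - C t * Y t) :
    ((q - 1) * t + h)⁻¹ •
        (X (q * t + h) * (Y (q * t + h))⁻¹ - X t * (Y t)⁻¹) =
      A t + B t * (X t * (Y t)⁻¹) +
        (X (q * t + h) * (Y (q * t + h))⁻¹) * C t +
        (X (q * t + h) * (Y (q * t + h))⁻¹) * D t * (X t * (Y t)⁻¹) := by
  have hYi : Y t * (Y t)⁻¹ = 1 := Matrix.mul_nonsing_inv _ hY
  have hY'i : (Y (q * t + h))⁻¹ * Y (q * t + h) = 1 := Matrix.nonsing_inv_mul _ hY'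
  have key : ((q - 1) * t + h)⁻¹ •
        (X (q * t + h) * (Y (q * t + h))⁻¹ - X t * (Y t)⁻¹) =
      (((q - 1) * t + h)⁻¹ • (X (q * t + h) - X t)) * (Y t)⁻¹ -
        X (q * t + h) * (Y (q * t + h))⁻¹ *
          (((q - 1) * t + h)⁻¹ • (Y (q * t + h) - Y t)) * (Y t)⁻¹ := by
    rw [Matrix.smul_mul, Matrix.mul_smul, Matrix.smul_mul, ← smul_sub]
    congr 1
    have h1 : X (q * t + h) * (Y (q * t + h))⁻¹ * (Y (q * t + h)) * (Y t)⁻¹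
        = X (q * t + h) * (Y t)⁻¹ := by
      rw [Matrix.mul_assoc (X (q * t + h)), hY'i, Matrix.mul_one]
    have h2 : X (q * t + h) * (Y (q * t + h))⁻¹ * Y t * (Y t)⁻¹
        = X (q * t + h) * (Y (q * t + h))⁻¹ := by
      rw [Matrix.mul_assoc, hYi, Matrix.mul_one]
    rw [Matrix.sub_mul, Matrix.mul_sub, Matrix.sub_mul, h1, h2]
    abel
  rw [key, hX, hYeq]
  rw [Matrix.add_mul, Matrix.mul_assoc (A t), hYi, Matrix.mul_one]
  rw [Matrix.mul_sub, Matrix.sub_mul, Matrix.mul_neg, Matrix.neg_mul]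
  rw [Matrix.mul_assoc _ (C t * Y t), Matrix.mul_assoc (C t), hYi, Matrix.mul_one]
  simp only [Matrix.mul_assoc]
  abel
end

section
/- Let g(t) = [[M(t), N(t)],[P(t), Q(t)]] be an invertible block-matrix curve, W0 a fixed n×k matrix, and define the coefficients by [[B, A],[-D, -C]] = (U_{q,h} g) g⁻¹. If P(t) W0 + Q(t) and P(qt+h) W0 + Q(qt+h) are invertible, then W(t) = (M(t) W0 + N(t))(P(t) W0 + Q(t))⁻¹ satisfies U_{q,h}W(t) = A(t) + B(t)W(t) + W(qt+h)C(t) + W(qt+h)D(t)W(t). -/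
theorem discrete_riccati_group_solution
    (q h : ℝ) (hqh : ¬(q = 1 ∧ h = 0)) (n k : ℕ)
    (M : ℝ → Matrix (Fin n) (Fin n) ℝ) (N : ℝ → Matrix (Fin n) (Fin k) ℝ)
    (P : ℝ → Matrix (Fin k) (Fin n) ℝ) (Q : ℝ → Matrix (Fin k) (Fin k) ℝ)
    (A : ℝ → Matrix (Fin n) (Fin k) ℝ) (B : ℝ → Matrix (Fin n) (Fin n) ℝ)
    (C : ℝ → Matrix (Fin k) (Fin k) ℝ) (D : ℝ → Matrix (Fin k) (Fin n) ℝ)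
    (W0 : Matrix (Fin n) (Fin k) ℝ)
    (g : ℝ → Matrix (Fin n ⊕ Fin k) (Fin n ⊕ Fin k) ℝ)
    (hg : ∀ s, g s = Matrix.fromBlocks (M s) (N s) (P s) (Q s))
    (hginv : ∀ s, IsUnit (g s).det)
    (hcoef : ∀ s, ((q - 1) * s + h) ≠ 0 →
      (((q - 1) * s + h)⁻¹ • (g (q * s + h) - g s)) * (g s)⁻¹ =
        Matrix.fromBlocks (B s) (A s) (-(D s)) (-(C s)))
    (t : ℝ) (ht : (q - 1) * t + h ≠ 0)
    (hPQ : IsUnit (P t * W0 + Q t).det)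
    (hPQ' : IsUnit (P (q * t + h) * W0 + Q (q * t + h)).det)
    (W : ℝ → Matrix (Fin n) (Fin k) ℝ)
    (hW : ∀ s, W s = (M s * W0 + N s) * (P s * W0 + Q s)⁻¹) :
    ((q - 1) * t + h)⁻¹ • (W (q * t + h) - W t) =
      A t + B t * W t + W (q * t + h) * C t + W (q * t + h) * D t * W t := by
  set δ : ℝ := ((q - 1) * t + h)⁻¹ with hδ
  set t' : ℝ := q * t + h with ht'
  -- full matrix equation
  have E : δ • (g t' - g t) =
      Matrix.fromBlocks (B t) (A t) (-(D t)) (-(C t)) * g t := by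
    have := hcoef t ht
    calc δ • (g t' - g t)
        = (δ • (g t' - g t)) * (g t)⁻¹ * g t :=
          (Matrix.nonsing_inv_mul_cancel_right _ _ (hginv t)).symm
      _ = _ := by rw [this]
  rw [hg t', hg t] at E
  rw [sub_eq_add_neg, Matrix.fromBlocks_neg, Matrix.fromBlocks_add,
    Matrix.fromBlocks_smul, Matrix.fromBlocks_multiply, Matrix.fromBlocks_inj] at E
  obtain ⟨e11, e12, e21, e22⟩ := E
  -- abbreviations
  set T : ℝ → Matrix (Fin n) (Fin k) ℝ := fun s => M s * W0 + N s with hT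
  set S : ℝ → Matrix (Fin k) (Fin k) ℝ := fun s => P s * W0 + Q s with hS
  have eq1 : δ • (T t' - T t) = B t * T t + A t * S t := by
    have h1 := congrArg (fun X => X * W0) e11
    calc δ • (T t' - T t)
        = (δ • (M t' + -M t)) * W0 + (δ • (N t' + -N t)) := by
          simp only [hT, smul_sub, sub_eq_add_neg, Matrix.smul_mul, Matrix.add_mul,
            Matrix.neg_mul, smul_add, smul_neg]
          abel
      _ = (B t * M t + A t * P t) * W0 + (B t * N t + A t * Q t) := by rw [e11, e12]
      _ = B t * T t + A t * S t := by
          simp only [hT, hS, Matrix.add_mul, Matrix.mul_add, Matrix.mul_assoc]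
          abel
  have eq2 : δ • (S t' - S t) = -(D t * T t) - C t * S t := by
    calc δ • (S t' - S t)
        = (δ • (P t' + -P t)) * W0 + (δ • (Q t' + -Q t)) := by
          simp only [hS, smul_sub, sub_eq_add_neg, Matrix.smul_mul, Matrix.add_mul,
            Matrix.neg_mul, smul_add, smul_neg]
          abel
      _ = (-(D t) * M t + -(C t) * P t) * W0 + (-(D t) * N t + -(C t) * Q t) := by
          rw [e21, e22]
      _ = -(D t * T t) - C t * S t := by
          simp only [hT, hS, Matrix.add_mul, Matrix.mul_add, Matrix.neg_mul,
            Matrix.mul_assoc, sub_eq_add_neg, neg_add]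
          abel
  have hSS : S t * (S t)⁻¹ = 1 := Matrix.mul_nonsing_inv _ hPQ
  have hS'S : (S t')⁻¹ * S t' = 1 := Matrix.nonsing_inv_mul _ hPQ'
  have hWt : W t = T t * (S t)⁻¹ := hW t
  have hWt' : W t' = T t' * (S t')⁻¹ := hW t'
  have ha : T t' * (S t')⁻¹ * (S t' * (S t)⁻¹) = T t' * (S t)⁻¹ := by
    rw [← Matrix.mul_assoc, Matrix.mul_assoc (T t'), hS'S, Matrix.mul_one]
  have hb : T t' * (S t')⁻¹ * (S t * (S t)⁻¹) = T t' * (S t')⁻¹ := by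
    rw [hSS, Matrix.mul_one]
  have key : δ • (W t' - W t) =
      (δ • (T t' - T t)) * (S t)⁻¹ - W t' * ((δ • (S t' - S t)) * (S t)⁻¹) := by
    rw [hWt, hWt']
    simp only [smul_sub, Matrix.sub_mul, Matrix.mul_sub, Matrix.smul_mul, Matrix.mul_smul,
      ha, hb]
    abel
  rw [key, eq1, eq2, hWt, hWt']
  simp only [Matrix.add_mul, Matrix.sub_mul, Matrix.neg_mul, Matrix.mul_sub, Matrix.mul_neg,
    Matrix.mul_assoc, hSS, Matrix.mul_one]
  abel
end

section
/- Non-degeneracy propagation: let g : ℝ → Matrix (Fin N) (Fin N) ℂ be holomorphic (entire) and satisfy g(qt) = ((q-1)t·Ξ(t) + I) g(t) for all t, where Ξ is entire. If det g(t1) = 0 for some t1, then det g(q^n t1) = 0 for all n ∈ ℕ; consequently if additionally |q| < 1, then det g vanishes identically (since det g is entire and vanishes on a sequence accumulating at 0, provided det g(0) = 0 follows by continuity). -/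
/-!
Taking determinants turns the matrix equation into the scalar one `f (q t) = φ t * f t` for the
entire functions `f = det ∘ g` and `φ t = det ((q - 1) t Ξ(t) + 1)`, with `φ 0 = 1`. A zero of `f`
therefore propagates along `q ^ m * t₁ → 0`, so `f 0 = 0`. If `f` had finite order `n` at `0`,
writing `f z = z ^ n h z` with `h 0 ≠ 0` and letting `z → 0` in `q ^ n h (q z) = φ z h z` gives
`q ^ n = 1`, impossible for `n ≥ 1` since `‖q‖ < 1`; so `f` vanishes near `0`, hence everywhere.
-/

open Filter Topology

theorem Differentiable.matrix_det {𝕜 E n : Type*} [NontriviallyNormedField 𝕜]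
    [NormedAddCommGroup E] [NormedSpace 𝕜 E] [Fintype n] [DecidableEq n]
    {M : E → Matrix n n 𝕜} (hM : ∀ i j, Differentiable 𝕜 fun x => M x i j) :
    Differentiable 𝕜 fun x => (M x).det := by
  simp only [Matrix.det_apply, Units.smul_def]
  fun_prop

lemma apply_pow_mul_eq_zero {M R : Type*} [Monoid M] [MulZeroClass R] {f φ : M → R} {q t : M}
    (h : ∀ z, f (q * z) = φ z * f z) (ht : f t = 0) (m : ℕ) : f (q ^ m * t) = 0 := by
  induction m with
  | zero => simpa using ht
  | succ m ih => rw [pow_succ', mul_assoc, h, ih, mul_zero]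

lemma apply_zero_eq_zero_of_forall_pow_mul {R X : Type*} [NormedRing R] [TopologicalSpace X]
    [T2Space X] [Zero X] {f : R → X} {q t : R} (hf : ContinuousAt f 0) (hq : ‖q‖ < 1)
    (h : ∀ m : ℕ, f (q ^ m * t) = 0) : f 0 = 0 := by
  have hlim : Tendsto (fun m : ℕ => q ^ m * t) atTop (𝓝 0) := by
    simpa using (tendsto_pow_atTop_nhds_zero_of_norm_lt_one hq).mul_const t
  refine tendsto_nhds_unique (hf.tendsto.comp hlim) ?_
  simp only [Function.comp_def, h, tendsto_const_nhds]

section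

variable {𝕜 E : Type*} [NontriviallyNormedField 𝕜] [NormedAddCommGroup E] [NormedSpace 𝕜 E]
  {f : 𝕜 → E} {φ : 𝕜 → 𝕜} {q : 𝕜}

lemma pow_analyticOrderAt_eq_one_of_eventually_comp_mul (hf : AnalyticAt 𝕜 f 0)
    (hφ : ContinuousAt φ 0) (hφ0 : φ 0 = 1) (h : ∀ᶠ z in 𝓝 0, f (q * z) = φ z • f z) {n : ℕ}
    (hn : analyticOrderAt f 0 = n) : q ^ n = 1 := by
  obtain ⟨u, hu, hu0, hfu⟩ := hf.analyticOrderAt_eq_natCast.mp hn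
  simp only [sub_zero] at hfu
  have hq : Tendsto (q * ·) (𝓝 0) (𝓝 0) := by
    simpa using (continuous_const_mul q).tendsto 0
  have hcancel : ∀ᶠ z in 𝓝[≠] 0, q ^ n • u (q * z) = φ z • u z := by
    filter_upwards [nhdsWithin_le_nhds (h.and (hfu.and (hq.eventually hfu))),
      self_mem_nhdsWithin] with z ⟨hz, hfz, hfqz⟩ hz0
    rw [hfz, hfqz, mul_pow, mul_smul, smul_comm (q ^ n), smul_comm (φ z)] at hz
    exact smul_right_injective E (pow_ne_zero n hz0) hz
  have hlim : q ^ n • u 0 = φ 0 • u 0 :=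
    tendsto_nhds_unique
      ((((hu.continuousAt.tendsto.comp hq).const_smul (q ^ n)).mono_left nhdsWithin_le_nhds).congr'
        hcancel)
      ((hφ.tendsto.smul hu.continuousAt.tendsto).mono_left nhdsWithin_le_nhds)
  rw [hφ0, one_smul] at hlim
  have hsub : (q ^ n - 1) • u 0 = 0 := by rw [sub_smul, one_smul, hlim, sub_self]
  exact sub_eq_zero.mp ((smul_eq_zero.mp hsub).resolve_right hu0)

lemma analyticOrderAt_eq_top_of_eventually_comp_mul (hf : AnalyticAt 𝕜 f 0) (hf0 : f 0 = 0)
    (hφ : ContinuousAt φ 0) (hφ0 : φ 0 = 1) (hq : ‖q‖ < 1)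
    (h : ∀ᶠ z in 𝓝 0, f (q * z) = φ z • f z) : analyticOrderAt f 0 = ⊤ := by
  by_contra hne
  obtain ⟨n, hn⟩ := WithTop.ne_top_iff_exists.mp hne
  have hqn := pow_analyticOrderAt_eq_one_of_eventually_comp_mul hf hφ hφ0 h hn.symm
  have hn0 : n = 0 := by
    by_contra hn0
    have : ‖q‖ ^ n = 1 := by rw [← norm_pow, hqn, norm_one]
    exact hq.ne ((pow_eq_one_iff_of_nonneg (norm_nonneg q) hn0).mp this)
  subst hn0
  exact (hf.analyticOrderAt_eq_zero.mp hn.symm) hf0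

end

theorem degeneracy_propagation_general
    (q : ℂ) (hq1 : ‖q‖ < 1) (N : ℕ)
    (Ξ : ℂ → Matrix (Fin N) (Fin N) ℂ)
    (hΞ : ∀ i j, Differentiable ℂ (fun t => Ξ t i j))
    (g : ℂ → Matrix (Fin N) (Fin N) ℂ)
    (hg : ∀ i j, Differentiable ℂ (fun t => g t i j))
    (heq : ∀ t, g (q * t) = (((q - 1) * t) • Ξ t + 1) * g t)
    (t1 : ℂ) (ht1 : (g t1).det = 0) :
    (∀ m : ℕ, (g (q ^ m * t1)).det = 0) ∧ (∀ t, (g t).det = 0) := by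
  set f : ℂ → ℂ := fun t => (g t).det
  set φ : ℂ → ℂ := fun t => (((q - 1) * t) • Ξ t + 1 : Matrix (Fin N) (Fin N) ℂ).det
  have hf : Differentiable ℂ f := Differentiable.matrix_det hg
  have hφ : Differentiable ℂ φ := Differentiable.matrix_det fun i j => by
    simp only [Matrix.add_apply, Matrix.smul_apply, smul_eq_mul]
    fun_prop
  have hfeq : ∀ t, f (q * t) = φ t * f t := fun t => by simp only [f, φ, heq t, Matrix.det_mul]
  have hzeros : ∀ m : ℕ, f (q ^ m * t1) = 0 := apply_pow_mul_eq_zero hfeq ht1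
  refine ⟨hzeros, fun t => ?_⟩
  have htop : analyticOrderAt f 0 = ⊤ :=
    analyticOrderAt_eq_top_of_eventually_comp_mul (hf.analyticAt 0)
      (apply_zero_eq_zero_of_forall_pow_mul hf.continuous.continuousAt hq1 hzeros)
      hφ.continuous.continuousAt (by simp [φ]) hq1 (.of_forall hfeq)
  exact congrFun ((AnalyticOnNhd.analyticOrderAt_eq_top_iff_eq_zero 0 hf.analyticAt).mp htop) t

theorem degeneracy_propagation
    (q : ℂ) (hq0 : 0 < ‖q‖) (hq1 : ‖q‖ < 1) (N : ℕ)
    (Ξ : ℂ → Matrix (Fin N) (Fin N) ℂ)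
    (hΞ : ∀ i j, Differentiable ℂ (fun t => Ξ t i j))
    (g : ℂ → Matrix (Fin N) (Fin N) ℂ)
    (hg : ∀ i j, Differentiable ℂ (fun t => g t i j))
    (heq : ∀ t, g (q * t) = (((q - 1) * t) • Ξ t + 1) * g t)
    (t1 : ℂ) (ht1 : (g t1).det = 0) :
    (∀ m : ℕ, (g (q ^ m * t1)).det = 0) ∧ (∀ t, (g t).det = 0) :=
  degeneracy_propagation_general q hq1 N Ξ hΞ g hg heq t1 ht1
end

section
/- If g : ℂ → Matrix (Fin N) (Fin N) ℂ is entire and satisfies g(qt) = ((q-1)t·Ξ(t) + I)g(t) with g(t0) = I for some t0, Ξ entire, and 0 < |q| < 1, then g(t) is invertible for every t ∈ ℂ. -/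
/-!
Taking determinants turns the equation into the scalar relation `f (q t) = d t * f t` for the
entire functions `f = det g` and `d t = det ((q - 1) t Ξ t + 1)`, with `d 0 = 1`. Since
`f t0 = 1`, `f` has a finite order `n` at `0`; comparing the lowest-order terms of both sides
gives `q ^ n = d 0 = 1`, so `n = 0` because `‖q‖ < 1`, i.e. `f 0 ≠ 0`. A zero `t` of `f` would
propagate to the zeros `q ^ m * t → 0`, contradicting `f ≠ 0` near `0`.
-/

open Filter Topology

theorem differentiable_det_of_entries {𝕜 E n : Type*} [NontriviallyNormedField 𝕜]
    [NormedAddCommGroup E] [NormedSpace 𝕜 E] [Fintype n] [DecidableEq n]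
    {M : E → Matrix n n 𝕜} (hM : ∀ i j, Differentiable 𝕜 fun t => M t i j) :
    Differentiable 𝕜 fun t => (M t).det := by
  simp only [Matrix.det_apply, Units.smul_def, zsmul_eq_mul]
  fun_prop

section QDifference

variable {𝕜 : Type*} [NontriviallyNormedField 𝕜] {f d : 𝕜 → 𝕜} {q : 𝕜}

theorem pow_analyticOrderNatAt_eq_of_apply_mul_eq (hf : AnalyticAt 𝕜 f 0)
    (hfin : analyticOrderAt f 0 ≠ ⊤) (hd : ContinuousAt d 0)
    (hrel : ∀ z, f (q * z) = d z * f z) :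
    q ^ analyticOrderNatAt f 0 = d 0 := by
  obtain ⟨G, hG, hG0, hfG⟩ := hf.analyticOrderAt_ne_top.mp hfin
  set n := analyticOrderNatAt f 0
  have hmul : Tendsto (q * ·) (𝓝 (0 : 𝕜)) (𝓝 0) :=
    (continuous_const_mul q).tendsto' 0 0 (mul_zero q)
  have hscaled : ∀ᶠ z in 𝓝[≠] 0, q ^ n * G (q * z) = d z * G z := by
    filter_upwards [nhdsWithin_le_nhds hfG, nhdsWithin_le_nhds (hmul.eventually hfG),
      self_mem_nhdsWithin] with z hfz hfqz hz
    have hr := hrel z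
    rw [hfz, hfqz] at hr
    simp only [sub_zero, smul_eq_mul, mul_pow] at hr
    apply mul_left_cancel₀ (pow_ne_zero n (show z ≠ 0 from hz))
    linear_combination hr
  have hlhs : Tendsto (fun z => q ^ n * G (q * z)) (𝓝[≠] 0) (𝓝 (q ^ n * G 0)) :=
    tendsto_nhdsWithin_of_tendsto_nhds
      (tendsto_const_nhds.mul (hG.continuousAt.tendsto.comp hmul))
  have hrhs : Tendsto (fun z => d z * G z) (𝓝[≠] 0) (𝓝 (d 0 * G 0)) :=
    tendsto_nhdsWithin_of_tendsto_nhds (hd.tendsto.mul hG.continuousAt.tendsto)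
  exact mul_right_cancel₀ hG0 (tendsto_nhds_unique (hlhs.congr' hscaled) hrhs)

theorem apply_ne_zero_of_apply_mul_eq (hf : AnalyticAt 𝕜 f 0)
    (hfin : analyticOrderAt f 0 ≠ ⊤) (hq : ‖q‖ < 1) (hd : ContinuousAt d 0) (hd0 : d 0 = 1)
    (hrel : ∀ z, f (q * z) = d z * f z) (t : 𝕜) : f t ≠ 0 := by
  have horder : analyticOrderNatAt f 0 = 0 := by
    have hpow := pow_analyticOrderNatAt_eq_of_apply_mul_eq hf hfin hd hrel
    by_contra hn
    exact (pow_lt_one₀ (norm_nonneg q) hq hn).ne (by rw [← norm_pow, hpow, hd0, norm_one])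
  have hf0 : f 0 ≠ 0 := by
    rw [← hf.analyticOrderAt_eq_zero, ← Nat.cast_analyticOrderNatAt hfin, horder,
      Nat.cast_zero]
  have hnear : ∀ᶠ z in 𝓝 0, f z ≠ 0 := hf.continuousAt.eventually_ne hf0
  intro ht
  have hzero : ∀ m : ℕ, f (q ^ m * t) = 0 := by
    intro m
    induction m with
    | zero => simpa using ht
    | succ m ih => rw [pow_succ', mul_assoc, hrel, ih, mul_zero]
  have htend : Tendsto (fun m : ℕ => q ^ m * t) atTop (𝓝 0) := by
    simpa using (tendsto_pow_atTop_nhds_zero_of_norm_lt_one hq).mul_const t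
  obtain ⟨m, hm⟩ := (htend.eventually hnear).exists
  exact hm (hzero m)

end QDifference

theorem q_difference_solution_invertible_general
    (q : ℂ) (hq1 : ‖q‖ < 1) (N : ℕ)
    (Ξ : ℂ → Matrix (Fin N) (Fin N) ℂ)
    (hΞ : ∀ i j, Differentiable ℂ (fun t => Ξ t i j))
    (g : ℂ → Matrix (Fin N) (Fin N) ℂ)
    (hg : ∀ i j, Differentiable ℂ (fun t => g t i j))
    (heq : ∀ t, g (q * t) = (((q - 1) * t) • Ξ t + 1) * g t)
    (t0 : ℂ) (ht0 : g t0 = 1) :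
    ∀ t, IsUnit (g t) := by
  have hΞc : Continuous Ξ := continuous_matrix fun i j => (hΞ i j).continuous
  have hcoef : ContinuousAt (fun t => (((q - 1) * t) • Ξ t + 1).det) 0 := by
    fun_prop
  have hdet : AnalyticOnNhd ℂ (fun t => (g t).det) Set.univ := fun z _ =>
    (differentiable_det_of_entries hg).analyticAt z
  have hfin : analyticOrderAt (fun t => (g t).det) 0 ≠ ⊤ :=
    hdet.analyticOrderAt_ne_top_of_isPreconnected isPreconnected_univ (Set.mem_univ t0)
      (Set.mem_univ 0) (by simp [(hdet t0 trivial).analyticOrderAt_eq_zero.2, ht0])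
  intro t
  rw [Matrix.isUnit_iff_isUnit_det, isUnit_iff_ne_zero]
  refine apply_ne_zero_of_apply_mul_eq (hdet 0 trivial) hfin hq1 hcoef (by simp)
    (fun z => ?_) t
  simp only [heq z, Matrix.det_mul]

theorem q_difference_solution_invertible
    (q : ℂ) (hq0 : 0 < ‖q‖) (hq1 : ‖q‖ < 1) (N : ℕ)
    (Ξ : ℂ → Matrix (Fin N) (Fin N) ℂ)
    (hΞ : ∀ i j, Differentiable ℂ (fun t => Ξ t i j))
    (g : ℂ → Matrix (Fin N) (Fin N) ℂ)
    (hg : ∀ i j, Differentiable ℂ (fun t => g t i j))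
    (heq : ∀ t, g (q * t) = (((q - 1) * t) • Ξ t + 1) * g t)
    (t0 : ℂ) (ht0 : g t0 = 1) :
    ∀ t, IsUnit (g t) :=
  q_difference_solution_invertible_general q hq1 N Ξ hΞ g hg heq t0 ht0
end

section
/- Uniqueness for the h-discrete matrix Riccati equation: let W1, W2 : ℤ → Matrix (Fin n) (Fin k) ℝ both satisfy W(m+1) - W(m) = A(m) + B(m)W(m) + W(m+1)C(m) + W(m+1)D(m)W(m) for all m, and suppose for all m the matrices I - C(m) - D(m)W1(m) and I + B(m) + W1(m+1)D(m) are invertible, and similarly for W2. If W1(n0) = W2(n0) for some n0 ∈ ℤ, then W1 = W2. -/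
lemma riccati_cancel_right {n k : ℕ} (M : Matrix (Fin k) (Fin k) ℝ)
    (h : IsUnit M.det) (X Y : Matrix (Fin n) (Fin k) ℝ)
    (hxy : X * M = Y * M) : X = Y := by
  have := congrArg (· * M⁻¹) hxy
  simpa [Matrix.mul_assoc, Matrix.mul_nonsing_inv M h] using this

lemma riccati_cancel_left {n k : ℕ} (M : Matrix (Fin n) (Fin n) ℝ)
    (h : IsUnit M.det) (X Y : Matrix (Fin n) (Fin k) ℝ)
    (hxy : M * X = M * Y) : X = Y := by
  have := congrArg (M⁻¹ * ·) hxy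
  simpa [← Matrix.mul_assoc, Matrix.nonsing_inv_mul M h] using this

theorem h_discrete_riccati_uniqueness
    (n k : ℕ)
    (A : ℤ → Matrix (Fin n) (Fin k) ℝ) (B : ℤ → Matrix (Fin n) (Fin n) ℝ)
    (C : ℤ → Matrix (Fin k) (Fin k) ℝ) (D : ℤ → Matrix (Fin k) (Fin n) ℝ)
    (W1 W2 : ℤ → Matrix (Fin n) (Fin k) ℝ)
    (h1 : ∀ m : ℤ, W1 (m + 1) - W1 m =
      A m + B m * W1 m + W1 (m + 1) * C m + W1 (m + 1) * D m * W1 m)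
    (h2 : ∀ m : ℤ, W2 (m + 1) - W2 m =
      A m + B m * W2 m + W2 (m + 1) * C m + W2 (m + 1) * D m * W2 m)
    (hinv1 : ∀ m : ℤ, IsUnit (1 - C m - D m * W1 m : Matrix (Fin k) (Fin k) ℝ).det ∧
      IsUnit (1 + B m + W1 (m + 1) * D m : Matrix (Fin n) (Fin n) ℝ).det)
    (hinv2 : ∀ m : ℤ, IsUnit (1 - C m - D m * W2 m : Matrix (Fin k) (Fin k) ℝ).det ∧
      IsUnit (1 + B m + W2 (m + 1) * D m : Matrix (Fin n) (Fin n) ℝ).det)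
    (n0 : ℤ) (h0 : W1 n0 = W2 n0) :
    W1 = W2 := by
  -- forward-solved form of the recursion
  have e1 : ∀ m : ℤ, W1 (m + 1) * (1 - C m - D m * W1 m)
      = A m + W1 m + B m * W1 m := by
    intro m
    have h := h1 m
    rw [Matrix.mul_sub, Matrix.mul_sub, Matrix.mul_one, ← Matrix.mul_assoc,
      ← sub_eq_zero]
    rw [← sub_eq_zero] at h
    rw [← h]; abel
  have e2 : ∀ m : ℤ, W2 (m + 1) * (1 - C m - D m * W2 m)
      = A m + W2 m + B m * W2 m := by
    intro m
    have h := h2 m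
    rw [Matrix.mul_sub, Matrix.mul_sub, Matrix.mul_one, ← Matrix.mul_assoc,
      ← sub_eq_zero]
    rw [← sub_eq_zero] at h
    rw [← h]; abel
  -- backward-solved form of the recursion
  have f1 : ∀ m : ℤ, (1 + B m + W1 (m + 1) * D m) * W1 m
      = W1 (m + 1) - A m - W1 (m + 1) * C m := by
    intro m
    have h := h1 m
    rw [Matrix.add_mul, Matrix.add_mul, Matrix.one_mul, Matrix.mul_assoc,
      ← sub_eq_zero]
    rw [Matrix.mul_assoc, ← sub_eq_zero, ← neg_eq_zero] at h
    rw [← h]; abel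
  have f2 : ∀ m : ℤ, (1 + B m + W2 (m + 1) * D m) * W2 m
      = W2 (m + 1) - A m - W2 (m + 1) * C m := by
    intro m
    have h := h2 m
    rw [Matrix.add_mul, Matrix.add_mul, Matrix.one_mul, Matrix.mul_assoc,
      ← sub_eq_zero]
    rw [Matrix.mul_assoc, ← sub_eq_zero, ← neg_eq_zero] at h
    rw [← h]; abel
  have fwd : ∀ m : ℤ, W1 m = W2 m → W1 (m + 1) = W2 (m + 1) := by
    intro m hm
    have a1 := e1 m
    have a2 := e2 m
    rw [hm] at a1
    exact riccati_cancel_right _ (hinv2 m).1 _ _ (a1.trans a2.symm)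
  have bwd : ∀ m : ℤ, W1 (m + 1) = W2 (m + 1) → W1 m = W2 m := by
    intro m hm
    have a1 := f1 m
    have a2 := f2 m
    rw [hm] at a1
    exact riccati_cancel_left _ (by rw [← hm]; exact (hinv1 m).2) _ _ (a1.trans a2.symm)
  funext m
  exact Int.inductionOn' m n0 h0 (fun j _ ih => fwd j ih)
    (fun j _ ih => bwd (j - 1) (by simpa using ih))
end

section
/- For the scalar discrete Riccati equation w(n+1) - w(n) = -(2n+1) + (2n+1)w(n) + (2n+1)w(n+1) - (2n+1)w(n+1)w(n), the function w(n) = ((u0 - 1)n² + u0)/((u0 - 1)n² + 1) is a solution for every u0 such that the denominator never vanishes, and satisfies w(0) = u0. -/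
theorem scalar_discrete_riccati_example
    (u0 : ℝ) (hden : ∀ m : ℤ, (u0 - 1) * (m : ℝ) ^ 2 + 1 ≠ 0)
    (w : ℤ → ℝ)
    (hw : ∀ m : ℤ, w m = ((u0 - 1) * (m : ℝ) ^ 2 + u0) / ((u0 - 1) * (m : ℝ) ^ 2 + 1)) :
    (∀ m : ℤ, w (m + 1) - w m =
      -(2 * (m : ℝ) + 1) + (2 * (m : ℝ) + 1) * w m + (2 * (m : ℝ) + 1) * w (m + 1) -
        (2 * (m : ℝ) + 1) * w (m + 1) * w m) ∧ w 0 = u0 := by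
  constructor
  · intro m
    have h1 := hden m
    have h2 := hden (m + 1)
    rw [hw m, hw (m + 1)]
    push_cast at h2 ⊢
    field_simp
    ring
  · have := hw 0
    simp at this
    rw [this]
end
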